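/- limsup over n of ln(g(n))/ln(n) equals 1, where g(n) is the number of odd coefficients of (1+x+x^2)^n. -/

import Mathlib

open Polynomial

/-- The number of odd coefficients of a polynomial over ℤ. -/
noncomputable def oddCoeffCount (p : Polynomial ℤ) : ℕ :=
  (p.support.filter fun j => Odd (p.coeff j)).card

noncomputable def g (n : ℕ) : ℕ := oddCoeffCount ((1 + X + X ^ 2) ^ n)

/-! The upper bound is the degree count `g n ≤ 2n + 1`. For the lower bound work modulo 2,
where `(1 + x + x²) ^ 2 ^ k = 1 + y + y²` with `y = x ^ 2 ^ k` (Frobenius) and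
`(1 + x + x²)(1 + x) = 1 + x³`. If `3s + 1 = 2 ^ k`, then
`(1 + x + x²) ^ (3s) = (1 + y + y²)(1 + x) / (1 + x³)`, and expanding
`1 / (1 + x³) = ∑ x^(3i)` shows that its coefficients at `x^(3j)`, `j ≤ 2s`, are all odd.
So `g n ≥ 2n / 3` for `n = 4^t - 1`, and `log (g n) / log n` is squeezed between
`1 + log (2/3) / log n` along this sequence and `1 + log 3 / log n` everywhere. -/

open Filter Topology Finset Real

section Semiring

variable {R : Type*} [Semiring R]

noncomputable def cubeGeomSum (n : ℕ) : R[X] := ∑ i ∈ range n, X ^ (3 * i)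

lemma coeff_cubeGeomSum (n m : ℕ) :
    (cubeGeomSum n : R[X]).coeff m = if 3 ∣ m ∧ m < 3 * n then 1 else 0 := by
  simp only [cubeGeomSum, finsetSum_coeff, coeff_X_pow]
  split_ifs with hm
  · obtain ⟨⟨i, rfl⟩, hi⟩ := hm
    rw [sum_eq_single i (fun b _ hb => if_neg (by omega))
      (fun h => (h (mem_range.2 (by omega))).elim), if_pos rfl]
  · exact sum_eq_zero fun i hi =>
      if_neg fun h => hm ⟨⟨i, h⟩, by rw [mem_range] at hi; omega⟩

/-- `(1 + X + X²) ^ (3s)` in characteristic 2 when `3s + 1` is a power of two. -/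
noncomputable def trinomialPowClosedForm (s : ℕ) : R[X] :=
  cubeGeomSum (2 * s + 1) + (X + X ^ (3 * s + 2)) * cubeGeomSum s

lemma coeff_trinomialPowClosedForm_three_mul {s j : ℕ} (hj : j ≤ 2 * s) :
    (trinomialPowClosedForm s : R[X]).coeff (3 * j) = 1 := by
  have coeff_X_mul' (p : R[X]) (d : ℕ) :
      (X * p).coeff d = if 1 ≤ d then p.coeff (d - 1) else 0 := by
    simpa using coeff_X_pow_mul' p 1 d
  rw [trinomialPowClosedForm, add_mul, coeff_add, coeff_add, coeff_X_mul', coeff_X_pow_mul',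
    coeff_cubeGeomSum, coeff_cubeGeomSum, coeff_cubeGeomSum]
  split_ifs <;> first | omega | simp

end Semiring

section CharTwo

variable {R : Type*} [CommRing R] [CharP R 2]

lemma trinomial_pow_two_pow (k : ℕ) :
    (1 + X + X ^ 2 : R[X]) ^ 2 ^ k = 1 + X ^ 2 ^ k + (X ^ 2 ^ k) ^ 2 := by
  rw [add_pow_char_pow, add_pow_char_pow, one_pow, pow_right_comm]

lemma trinomial_mul_one_add_X : (1 + X + X ^ 2 : R[X]) * (1 + X) = 1 + X ^ 3 := by
  linear_combination (X + X ^ 2 : R[X]) * CharTwo.two_eq_zero (R := R[X])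

lemma cubeGeomSum_mul (n : ℕ) : cubeGeomSum n * (1 + X ^ 3 : R[X]) = 1 + X ^ (3 * n) := by
  have h := geom_sum_mul (X ^ 3 : R[X]) n
  simp only [CharTwo.sub_eq_add, ← pow_mul] at h
  rw [cubeGeomSum, add_comm 1, add_comm 1, ← h]

lemma trinomialPowClosedForm_mul (s : ℕ) :
    trinomialPowClosedForm s * (1 + X ^ 3 : R[X]) =
      (1 + X ^ (3 * s + 1) + (X ^ (3 * s + 1)) ^ 2) * (1 + X) := by
  rw [trinomialPowClosedForm, add_mul, mul_assoc, cubeGeomSum_mul, cubeGeomSum_mul]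
  ring

theorem trinomial_pow_eq_trinomialPowClosedForm {s k : ℕ} (hs : 3 * s + 1 = 2 ^ k) :
    (1 + X + X ^ 2 : R[X]) ^ (3 * s) = trinomialPowClosedForm s := by
  have hreg : IsRegular (1 + X ^ 3 : R[X]) := by
    simpa [add_comm] using (monic_X_pow_add_C (1 : R) three_ne_zero).isRegular
  apply hreg.right
  beta_reduce
  rw [trinomialPowClosedForm_mul, hs, ← trinomial_pow_two_pow, ← trinomial_mul_one_add_X,
    ← mul_assoc, ← pow_succ, hs]

lemma two_mul_add_one_le_card_support_trinomial_pow [Nontrivial R] {s k : ℕ}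
    (hs : 3 * s + 1 = 2 ^ k) : 2 * s + 1 ≤ #((1 + X + X ^ 2 : R[X]) ^ (3 * s)).support := by
  rw [trinomial_pow_eq_trinomialPowClosedForm hs]
  calc 2 * s + 1 = #((range (2 * s + 1)).image (3 * ·)) := by
        rw [card_image_of_injective _ fun a b h => by simpa using h, card_range]
    _ ≤ _ := by
        refine card_le_card fun m hm => ?_
        obtain ⟨j, hj, rfl⟩ := mem_image.1 hm
        rw [mem_support_iff,
          coeff_trinomialPowClosedForm_three_mul (Nat.lt_succ_iff.1 (mem_range.1 hj))]
        exact one_ne_zero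

end CharTwo

lemma oddCoeffCount_eq_card_support_map (p : ℤ[X]) :
    oddCoeffCount p = #(p.map (Int.castRingHom (ZMod 2))).support := by
  rw [oddCoeffCount]
  congr 1
  ext j
  simp only [mem_filter, mem_support_iff, coeff_map, eq_intCast, ne_eq,
    ZMod.intCast_eq_zero_iff_even, Int.not_even_iff_odd, and_iff_right_iff_imp]
  exact fun h h0 => by simp [h0] at h

lemma g_eq_card_support (n : ℕ) : g n = #((1 + X + X ^ 2 : (ZMod 2)[X]) ^ n).support := by
  simp [g, oddCoeffCount_eq_card_support_map]

lemma one_le_g (n : ℕ) : 1 ≤ g n := by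
  rw [g_eq_card_support, Nat.one_le_iff_ne_zero, Ne, card_eq_zero, support_eq_empty]
  exact fun h => by simpa using congrArg (eval 0) h

lemma g_le (n : ℕ) : g n ≤ 2 * n + 1 := by
  rw [g_eq_card_support]
  refine (card_supp_le_succ_natDegree _).trans (Nat.succ_le_succ ?_)
  refine natDegree_pow_le.trans ?_
  rw [mul_comm]
  exact Nat.mul_le_mul_right n (by compute_degree)

lemma frequently_two_mul_le_three_mul_g : ∃ᶠ n in atTop, 2 * n ≤ 3 * g n := by
  refine frequently_atTop.2 fun M => ?_
  obtain ⟨s, hs⟩ : 3 ∣ 4 ^ M - 1 := by simpa using Nat.sub_dvd_pow_sub_pow 4 1 M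
  have hM : M < 4 ^ M := Nat.lt_pow_self (by norm_num)
  have h4 : (4 : ℕ) ^ M = 2 ^ (2 * M) := by rw [pow_mul]; norm_num
  have hs : 3 * s + 1 = 2 ^ (2 * M) := by
    have := Nat.one_le_pow M 4 (by norm_num)
    omega
  have hg := two_mul_add_one_le_card_support_trinomial_pow (R := ZMod 2) hs
  rw [← g_eq_card_support] at hg
  exact ⟨3 * s, by omega, by omega⟩

lemma log_div_log_le {x y C : ℝ} (hx : 1 < x) (hy : 0 < y) (h : y ≤ C * x) :
    log y / log x ≤ 1 + log C / log x := by
  have hC : 0 < C := pos_of_mul_pos_left (hy.trans_le h) (by linarith)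
  rw [div_le_iff₀ (log_pos hx), add_mul, one_mul, div_mul_cancel₀ _ (log_pos hx).ne', add_comm,
    ← log_mul hC.ne' (by linarith)]
  exact log_le_log hy h

lemma le_log_div_log {x y c : ℝ} (hx : 1 < x) (hc : 0 < c) (h : c * x ≤ y) :
    1 + log c / log x ≤ log y / log x := by
  rw [le_div_iff₀ (log_pos hx), add_mul, one_mul, div_mul_cancel₀ _ (log_pos hx).ne', add_comm,
    ← log_mul hc.ne' (by linarith)]
  exact log_le_log (by positivity) h

lemma tendsto_one_add_log_div_log (C : ℝ) :
    Tendsto (fun n : ℕ => 1 + log C / log n) atTop (𝓝 1) := by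
  simpa using tendsto_const_nhds.add
    (tendsto_const_nhds.div_atTop (tendsto_log_atTop.comp tendsto_natCast_atTop_atTop))

lemma Filter.limsup_eq_of_eventually_le_of_frequently_ge {α : Type*} {l : Filter α} [l.NeBot]
    {u v : α → ℝ} {a : ℝ} (hv : Tendsto v l (𝓝 a)) (hle : u ≤ᶠ[l] v)
    (hge : ∀ c < a, ∃ᶠ x in l, c ≤ u x) : limsup u l = a := by
  have hbdd : IsBoundedUnder (· ≤ ·) l u := hv.isBoundedUnder_le.mono_le hle
  refine le_antisymm ?_ <| le_of_forall_lt_imp_le_of_dense fun c hc =>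
    le_limsup_of_frequently_le (hge c hc) hbdd
  calc limsup u l ≤ limsup v l :=
        limsup_le_limsup hle (.of_frequently_ge (hge (a - 1) (by linarith))) hv.isBoundedUnder_le
    _ = a := hv.limsup_eq

theorem stmt_13 :
    Filter.limsup (fun n : ℕ => Real.log (g n) / Real.log n) Filter.atTop = 1 := by
  refine limsup_eq_of_eventually_le_of_frequently_ge (tendsto_one_add_log_div_log 3) ?_ ?_
  · filter_upwards [eventually_gt_atTop 1] with n hn
    have hg : (g n : ℝ) ≤ 3 * n := by exact_mod_cast (g_le n).trans (by omega)
    exact log_div_log_le (by exact_mod_cast hn) (by exact_mod_cast one_le_g n) hg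
  · intro c hc
    have hlower := (tendsto_one_add_log_div_log (2 / 3)).eventually (lt_mem_nhds hc)
    refine (frequently_two_mul_le_three_mul_g.and_eventually
      (hlower.and (eventually_gt_atTop 1))).mono ?_
    rintro n ⟨hgn, hcn, hn⟩
    have hg : (2 / 3 : ℝ) * n ≤ g n := by
      have : (2 * n : ℝ) ≤ 3 * g n := by exact_mod_cast hgn
      linarith
    exact hcn.le.trans (le_log_div_log (by exact_mod_cast hn) (by norm_num) hg)
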